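/- Let F be a field of characteristic 2, let t ≥ 2, and let Q be the quadratic form on F^{2t} defined by Q(x_1, …, x_{2t}) = Σ_{i=1}^{t} x_i x_{t+i}. Then the map φ: F² → GL_{2t}(F) defined by φ(a, b) = I_{2t} + a (E_{1,t} + E_{2t,t+1}) + b (E_{1,2t} + E_{t,t+1}) + ab E_{1,t+1} is an injective group homomorphism from the additive group (F², +) into the isometry group O_{2t}(F, Q). -/

import Mathlib

/-
In characteristic 2, `φ(a, b) = (1 + a X)(1 + b Y)` for the root matrices
`X = E_{1,t} - E_{2t,t+1}` and `Y = E_{1,2t} - E_{t,t+1}` of the hyperbolic form `Q` (signs being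
invisible in characteristic 2). `X` and `Y` square to zero and commute, so `a ↦ 1 + a X` and
`b ↦ 1 + b Y` are commuting additive one-parameter groups of units, and each `1 + c X`, `1 + c Y`
preserves `Q` because the two cross terms it creates in `Q` cancel. Injectivity is read off the
entries `(1, t)` and `(1, 2t)` of `φ(a, b)`, which are `a` and `b`.
-/

open Matrix

/-- The quadratic form `Q(x_1, …, x_{2t}) = Σ_{i=1}^t x_i x_{t+i}` on `F^{2t}`
(indices here are 0-based). -/
def exQev {F : Type*} [Field F] (t : ℕ) (x : Fin (2 * t) → F) : F :=
  ∑ i : Fin t, x ⟨(i : ℕ), by have := i.2; omega⟩ * x ⟨t + (i : ℕ), by have := i.2; omega⟩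

/-- The map `φ(a,b) = I_{2t} + a·(E_{1,t} + E_{2t,t+1}) + b·(E_{1,2t} + E_{t,t+1})
+ ab·E_{1,t+1}` (indices here are 0-based). -/
def exPhiEv2 {F : Type*} [Field F] (t : ℕ) (ht : 2 ≤ t) (a b : F) :
    Matrix (Fin (2 * t)) (Fin (2 * t)) F :=
  1 + Matrix.single ⟨0, by omega⟩ ⟨t - 1, by omega⟩ a +
    Matrix.single ⟨2 * t - 1, by omega⟩ ⟨t, by omega⟩ a +
    Matrix.single ⟨0, by omega⟩ ⟨2 * t - 1, by omega⟩ b +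
    Matrix.single ⟨t - 1, by omega⟩ ⟨t, by omega⟩ b +
    Matrix.single ⟨0, by omega⟩ ⟨t, by omega⟩ (a * b)

section Indices

variable {t : ℕ}

def lowIdx (i : Fin t) : Fin (2 * t) := ⟨i, by omega⟩

def highIdx (i : Fin t) : Fin (2 * t) := ⟨t + i, by omega⟩

@[simp]
lemma lowIdx_inj {i k : Fin t} : lowIdx i = lowIdx k ↔ i = k := by
  simp [lowIdx, Fin.ext_iff]

@[simp]
lemma highIdx_inj {i k : Fin t} : highIdx i = highIdx k ↔ i = k := by
  simp [highIdx, Fin.ext_iff]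

@[simp]
lemma lowIdx_ne_highIdx (i k : Fin t) : lowIdx i ≠ highIdx k := by
  simp only [lowIdx, highIdx, ne_eq, Fin.ext_iff]; omega

@[simp]
lemma highIdx_ne_lowIdx (i k : Fin t) : highIdx i ≠ lowIdx k :=
  (lowIdx_ne_highIdx k i).symm

lemma exQev_eq_sum {F : Type*} [Field F] (x : Fin (2 * t) → F) :
    exQev t x = ∑ i, x (lowIdx i) * x (highIdx i) := rfl

end Indices

lemma Matrix.vecMul_single {R n : Type*} [Fintype n] [DecidableEq n]
    [NonUnitalNonAssocSemiring R] (v : n → R) (p q : n) (c : R) :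
    vecMul v (single p q c) = Pi.single q (v p * c) := by
  ext j
  rcases eq_or_ne j q with rfl | h
  · simp [vecMul, dotProduct, single_apply]
  · simp [vecMul, dotProduct, h, Ne.symm h]

section SquareZero

variable {R A : Type*} [CommRing R] [Ring A] [Algebra R A] {X Y : A}

lemma one_add_smul_mul_one_add_smul (hX : X * X = 0) (a b : R) :
    (1 + a • X) * (1 + b • X) = 1 + (a + b) • X := by
  simp only [add_mul, mul_add, one_mul, mul_one, smul_mul_smul_comm, hX, smul_zero, add_smul]
  abel

lemma isUnit_one_add_smul (hX : X * X = 0) (a : R) : IsUnit (1 + a • X) := by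
  refine isUnit_iff_exists.2 ⟨1 + (-a) • X, ?_, ?_⟩
  · rw [one_add_smul_mul_one_add_smul hX, add_neg_cancel, zero_smul, add_zero]
  · rw [one_add_smul_mul_one_add_smul hX, neg_add_cancel, zero_smul, add_zero]

lemma one_add_smul_mul_one_add_smul_add (hX : X * X = 0) (hY : Y * Y = 0) (hXY : Commute X Y)
    (a b a' b' : R) :
    (1 + (a + a') • X) * (1 + (b + b') • Y) =
      (1 + a • X) * (1 + b • Y) * ((1 + a' • X) * (1 + b' • Y)) := by
  have hcomm : Commute (1 + a' • X) (1 + b • Y) :=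
    (Commute.one_left _).add_left
      ((Commute.one_right _).add_right ((hXY.smul_left a').smul_right b))
  rw [← one_add_smul_mul_one_add_smul hX, ← one_add_smul_mul_one_add_smul hY, mul_assoc,
    ← mul_assoc (1 + a' • X), hcomm.eq, mul_assoc, ← mul_assoc]

end SquareZero

section RootMatrices

variable {R : Type*} [CommRing R] {t : ℕ}

/-- With `lowIdx`/`highIdx` the coordinates `x_i`, `x_{t+i}` paired by `Q`, `rootMatrixSub i k` and
`rootMatrixAdd i k` are root vectors of the Lie algebra of `O(Q)` for the roots `εᵢ - εₖ` and
`εᵢ + εₖ`. -/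
def rootMatrixSub (i k : Fin t) : Matrix (Fin (2 * t)) (Fin (2 * t)) R :=
  single (lowIdx i) (lowIdx k) 1 - single (highIdx k) (highIdx i) 1

def rootMatrixAdd (i k : Fin t) : Matrix (Fin (2 * t)) (Fin (2 * t)) R :=
  single (lowIdx i) (highIdx k) 1 - single (lowIdx k) (highIdx i) 1

lemma rootMatrixSub_mul_self {i k : Fin t} (hik : i ≠ k) :
    rootMatrixSub i k * rootMatrixSub i k = (0 : Matrix _ _ R) := by
  simp [rootMatrixSub, sub_mul, mul_sub, hik, Ne.symm hik]

lemma rootMatrixAdd_mul_self (i k : Fin t) :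
    rootMatrixAdd i k * rootMatrixAdd i k = (0 : Matrix _ _ R) := by
  simp [rootMatrixAdd, sub_mul, mul_sub]

lemma rootMatrixSub_mul_rootMatrixAdd {i k : Fin t} (hik : i ≠ k) :
    rootMatrixSub i k * rootMatrixAdd i k = -(single (lowIdx i) (highIdx i) 1 : Matrix _ _ R) := by
  simp [rootMatrixSub, rootMatrixAdd, sub_mul, mul_sub, Ne.symm hik]

lemma commute_rootMatrixSub_rootMatrixAdd {i k : Fin t} (hik : i ≠ k) :
    Commute (rootMatrixSub i k) (rootMatrixAdd i k : Matrix _ _ R) := by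
  rw [Commute, SemiconjBy, rootMatrixSub_mul_rootMatrixAdd hik]
  simp [rootMatrixSub, rootMatrixAdd, sub_mul, mul_sub, hik]

def rootPairMatrix (i k : Fin t) (a b : R) : Matrix (Fin (2 * t)) (Fin (2 * t)) R :=
  (1 + a • rootMatrixSub i k) * (1 + b • rootMatrixAdd i k)

lemma rootPairMatrix_eq {i k : Fin t} (hik : i ≠ k) (a b : R) :
    rootPairMatrix i k a b =
      1 + a • rootMatrixSub i k + b • rootMatrixAdd i k - single (lowIdx i) (highIdx i) (a * b) := by
  rw [rootPairMatrix, mul_add, add_mul, add_mul, one_mul, mul_one, smul_mul_smul_comm,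
    rootMatrixSub_mul_rootMatrixAdd hik, smul_neg, smul_single, smul_eq_mul, mul_one, one_mul]
  abel

lemma rootPairMatrix_apply_low {i k : Fin t} (hik : i ≠ k) (a b : R) :
    rootPairMatrix i k a b (lowIdx i) (lowIdx k) = a := by
  simp [rootPairMatrix_eq hik, rootMatrixSub, rootMatrixAdd, one_apply, hik]

lemma rootPairMatrix_apply_high {i k : Fin t} (hik : i ≠ k) (a b : R) :
    rootPairMatrix i k a b (lowIdx i) (highIdx k) = b := by
  simp [rootPairMatrix_eq hik, rootMatrixSub, rootMatrixAdd, one_apply, hik, Ne.symm hik]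

lemma rootPairMatrix_injective {i k : Fin t} (hik : i ≠ k) :
    Function.Injective (fun p : R × R => rootPairMatrix i k p.1 p.2) := fun p q h =>
  Prod.ext
    (by simpa [rootPairMatrix_apply_low hik] using congrFun (congrFun h (lowIdx i)) (lowIdx k))
    (by simpa [rootPairMatrix_apply_high hik] using congrFun (congrFun h (lowIdx i)) (highIdx k))

lemma rootPairMatrix_add {i k : Fin t} (hik : i ≠ k) (a b a' b' : R) :
    rootPairMatrix i k (a + a') (b + b') = rootPairMatrix i k a b * rootPairMatrix i k a' b' :=
  one_add_smul_mul_one_add_smul_add (rootMatrixSub_mul_self hik) (rootMatrixAdd_mul_self i k)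
    (commute_rootMatrixSub_rootMatrixAdd hik) a b a' b'

lemma isUnit_rootPairMatrix {i k : Fin t} (hik : i ≠ k) (a b : R) :
    IsUnit (rootPairMatrix i k a b) :=
  (isUnit_one_add_smul (rootMatrixSub_mul_self hik) a).mul
    (isUnit_one_add_smul (rootMatrixAdd_mul_self i k) b)

end RootMatrices

section Isometries

variable {F : Type*} [Field F] {t : ℕ}

lemma exQev_vecMul_one_add_smul_rootMatrixSub {i k : Fin t} (hik : i ≠ k) (c : F)
    (v : Fin (2 * t) → F) : exQev t (vecMul v (1 + c • rootMatrixSub i k)) = exQev t v := by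
  simp only [rootMatrixSub, vecMul_add, vecMul_one, vecMul_smul, vecMul_sub, vecMul_single, mul_one,
    exQev_eq_sum, Pi.add_apply, Pi.smul_apply, Pi.sub_apply, Pi.single_apply, lowIdx_inj,
    lowIdx_ne_highIdx, sub_zero, smul_eq_mul, mul_ite, mul_zero,
    highIdx_ne_lowIdx, highIdx_inj, zero_sub, mul_neg, mul_add, add_mul, ite_mul, zero_mul,
    Finset.sum_add_distrib, Finset.sum_ite_eq', Finset.mem_univ, ↓reduceIte, Finset.sum_neg_distrib,
    hik, add_zero]
  ring

lemma exQev_vecMul_one_add_smul_rootMatrixAdd (i k : Fin t) (c : F)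
    (v : Fin (2 * t) → F) : exQev t (vecMul v (1 + c • rootMatrixAdd i k)) = exQev t v := by
  simp only [rootMatrixAdd, vecMul_add, vecMul_one, vecMul_smul, vecMul_sub, vecMul_single, mul_one,
    exQev_eq_sum, Pi.add_apply, Pi.smul_apply, Pi.sub_apply, ne_eq, lowIdx_ne_highIdx,
    not_false_eq_true, Pi.single_eq_of_ne, sub_self, smul_eq_mul, mul_zero, add_zero, Pi.single_apply,
    highIdx_inj, mul_sub, mul_ite, mul_add, Finset.sum_add_distrib, Finset.sum_sub_distrib,
    Finset.sum_ite_eq', Finset.mem_univ, ↓reduceIte, add_eq_left]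
  ring

lemma exQev_vecMul_rootPairMatrix {i k : Fin t} (hik : i ≠ k) (a b : F) (v : Fin (2 * t) → F) :
    exQev t (vecMul v (rootPairMatrix i k a b)) = exQev t v := by
  rw [rootPairMatrix, ← vecMul_vecMul, exQev_vecMul_one_add_smul_rootMatrixAdd,
    exQev_vecMul_one_add_smul_rootMatrixSub hik]

end Isometries

lemma Fin.mk_zero_ne_mk_sub_one {t : ℕ} (ht : 2 ≤ t) :
    (⟨0, by omega⟩ : Fin t) ≠ ⟨t - 1, by omega⟩ := by
  simp only [ne_eq, Fin.mk.injEq]; omega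

lemma exPhiEv2_eq_rootPairMatrix {F : Type*} [Field F] (hchar : ringChar F = 2) (t : ℕ)
    (ht : 2 ≤ t) (a b : F) :
    exPhiEv2 t ht a b = rootPairMatrix ⟨0, by omega⟩ ⟨t - 1, by omega⟩ a b := by
  have : CharP F 2 := hchar ▸ ringChar.charP F
  have hik := Fin.mk_zero_ne_mk_sub_one ht
  have hlast : highIdx (⟨t - 1, by omega⟩ : Fin t) = ⟨2 * t - 1, by omega⟩ := by
    simp only [highIdx, Fin.ext_iff]; omega
  rw [rootPairMatrix_eq hik, exPhiEv2, rootMatrixSub, rootMatrixAdd, hlast]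
  simp only [smul_sub, smul_single, smul_eq_mul, mul_one]
  simp only [sub_eq_add_neg, single_neg, CharTwo.neg_eq, lowIdx, highIdx, add_zero]
  abel

theorem exPhiEv2_injective_hom_into_isometries {F : Type*} [Field F]
    (hchar : ringChar F = 2) (t : ℕ) (ht : 2 ≤ t) :
    Function.Injective (fun p : F × F => exPhiEv2 t ht p.1 p.2) ∧
    (∀ a b a' b' : F,
      exPhiEv2 t ht (a + a') (b + b') = exPhiEv2 t ht a b * exPhiEv2 t ht a' b') ∧
    ∀ a b : F, IsUnit (exPhiEv2 t ht a b) ∧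
      ∀ v : Fin (2 * t) → F,
        exQev t (Matrix.vecMul v (exPhiEv2 t ht a b)) = exQev t v := by
  simp only [exPhiEv2_eq_rootPairMatrix hchar]
  have hik := Fin.mk_zero_ne_mk_sub_one ht
  exact ⟨rootPairMatrix_injective hik, rootPairMatrix_add hik,
    fun a b => ⟨isUnit_rootPairMatrix hik a b, exQev_vecMul_rootPairMatrix hik a b⟩⟩
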